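/- arXiv:2506.16658 — 6 statements merged into one kernel-verified Lean document; each statement's English description precedes it below -/
import Mathlib

section
/- Let d ≥ 2 be an integer and s > 1 a real number. Let X and Y be independent random variables on a probability space, where X has the standard Gaussian distribution N(0,1) and Y has the chi-square distribution with d degrees of freedom (the Gamma distribution with shape d/2 and rate 1/2). Then P( X ≥ √( Y · (s^{2/(d−1)} − 1) ) ) ≤ 1/(2 s √(log s)). -/
/-!
Conditionally on `Y = y`, the event is a Gaussian tail at `√(a y)` with `a = s^{2/(d-1)} - 1`,
and the Mills-ratio bound controls it by `e^{-a y / 2} / √(2π a y)`. Against the `χ²_d` density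
this factor produces an unnormalised `Gamma((d-1)/2, (1+a)/2)` density, so, as
`(1 + a)^{(d-1)/2} = s`, the probability is at most `Γ((d-1)/2) / (2 s √(π a) Γ(d/2))`.
Finally `log s ≤ a (d-1)/2`, and log-convexity of `Γ` gives `y Γ(y)² ≤ π Γ(y + 1/2)²` for
`y = (d-1)/2 ≥ 1/2`, which is exactly what is needed to compare with `1 / (2 s √(log s))`.
-/

open MeasureTheory ProbabilityTheory Real Set Filter
open scoped ENNReal Topology

namespace Real

theorem Gamma_add_half_sq_le {x : ℝ} (hx : 0 < x) :
    Gamma (x + 1 / 2) ^ 2 ≤ x * Gamma x ^ 2 := by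
  have hΓ := Gamma_pos_of_pos hx
  have hconv := Gamma_mul_add_mul_le_rpow_Gamma_mul_rpow_Gamma (s := x) (t := x + 1)
    hx (by linarith) one_half_pos one_half_pos (by norm_num)
  rw [show 1 / 2 * x + 1 / 2 * (x + 1) = x + 1 / 2 by ring, Gamma_add_one hx.ne',
    ← mul_rpow hΓ.le (by positivity), ← sqrt_eq_rpow,
    le_sqrt' (Gamma_pos_of_pos (by linarith))] at hconv
  linarith

theorem mul_Gamma_sq_le_pi_mul_Gamma_add_half_sq {y : ℝ} (hy : 1 / 2 ≤ y) :
    y * Gamma y ^ 2 ≤ π * Gamma (y + 1 / 2) ^ 2 := by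
  have hy0 : 0 < y := by linarith
  have key := Gamma_add_half_sq_le (x := y + 1 / 2) (by linarith)
  rw [show y + 1 / 2 + 1 / 2 = y + 1 by ring, Gamma_add_one hy0.ne'] at key
  have hπ := pi_gt_three
  refine le_of_mul_le_mul_left ?_ hy0
  nlinarith [mul_le_mul_of_nonneg_right (show y + 1 / 2 ≤ π * y by nlinarith)
    (sq_nonneg (Gamma (y + 1 / 2)))]

theorem Gamma_sub_half_div_le_one_div_sqrt_log {α a s : ℝ} (hα : 1 ≤ α) (ha : 0 < a)
    (hs : 1 < s) (hlog : log s ≤ (α - 1 / 2) * a) :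
    Gamma (α - 1 / 2) / (2 * √(π * a) * Gamma α * s) ≤ 1 / (2 * s * √(log s)) := by
  have hΓ := Gamma_pos_of_pos (show 0 < α - 1 / 2 by linarith)
  have hΓ' := Gamma_pos_of_pos (show 0 < α by linarith)
  have hlog_pos := log_pos hs
  have hratio := mul_Gamma_sq_le_pi_mul_Gamma_add_half_sq (y := α - 1 / 2) (by linarith)
  rw [sub_add_cancel] at hratio
  have hsq : (Gamma (α - 1 / 2) * √(log s)) ^ 2 ≤ (√(π * a) * Gamma α) ^ 2 := by
    rw [mul_pow, mul_pow, sq_sqrt hlog_pos.le, sq_sqrt (by positivity)]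
    calc Gamma (α - 1 / 2) ^ 2 * log s ≤ Gamma (α - 1 / 2) ^ 2 * ((α - 1 / 2) * a) := by gcongr
      _ = a * ((α - 1 / 2) * Gamma (α - 1 / 2) ^ 2) := by ring
      _ ≤ a * (π * Gamma α ^ 2) := by gcongr
      _ = π * a * Gamma α ^ 2 := by ring
  have key := (pow_le_pow_iff_left₀ (by positivity) (by positivity) two_ne_zero).mp hsq
  rw [div_le_div_iff₀ (by positivity) (by positivity)]
  nlinarith [mul_le_mul_of_nonneg_left key (by linarith : (0 : ℝ) ≤ 2 * s)]

end Real

theorem integral_Ioi_mul_exp_neg_sq_div_two (t : ℝ) :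
    ∫ x in Ioi t, x * exp (-x ^ 2 / 2) = exp (-t ^ 2 / 2) := by
  have hderiv (x : ℝ) : HasDerivAt (fun x ↦ -exp (-x ^ 2 / 2)) (x * exp (-x ^ 2 / 2)) x :=
    (((hasDerivAt_pow 2 x).fun_neg.div_const 2).exp.fun_neg).congr_deriv (by ring)
  have hlim : Tendsto (fun x : ℝ ↦ -exp (-x ^ 2 / 2)) atTop (𝓝 0) := by
    simpa using (tendsto_exp_atBot.comp <|
      (tendsto_neg_atTop_atBot.comp (tendsto_pow_atTop two_ne_zero)).atBot_div_const
        two_pos).neg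
  have hint : Integrable (fun x : ℝ ↦ x * exp (-x ^ 2 / 2)) := by
    simpa [div_eq_inv_mul] using integrable_mul_exp_neg_mul_sq (b := 2⁻¹) (by norm_num)
  rw [integral_Ioi_of_hasDerivAt_of_tendsto' (fun x _ ↦ hderiv x) hint.integrableOn hlim]
  ring

theorem gaussianReal_Ici_le {t : ℝ} (ht : 0 < t) :
    gaussianReal 0 1 (Ici t) ≤ ENNReal.ofReal (exp (-t ^ 2 / 2) / (t * √(2 * π))) := by
  rw [gaussianReal_apply_eq_integral 0 one_ne_zero]
  refine ENNReal.ofReal_le_ofReal ?_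
  have hint : Integrable (fun x : ℝ ↦ (t * √(2 * π))⁻¹ * (x * exp (-x ^ 2 / 2))) := by
    refine Integrable.const_mul ?_ _
    simpa [div_eq_inv_mul] using integrable_mul_exp_neg_mul_sq (b := 2⁻¹) (by norm_num)
  calc ∫ x in Ici t, gaussianPDFReal 0 1 x
      ≤ ∫ x in Ici t, (t * √(2 * π))⁻¹ * (x * exp (-x ^ 2 / 2)) := by
        refine setIntegral_mono_on (integrable_gaussianPDFReal 0 1).integrableOn
          hint.integrableOn measurableSet_Ici fun x (hx : t ≤ x) ↦ ?_
        simp only [gaussianPDFReal, NNReal.coe_one, mul_one, sub_zero]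
        calc (√(2 * π))⁻¹ * exp (-x ^ 2 / 2)
            ≤ (√(2 * π))⁻¹ * (x / t * exp (-x ^ 2 / 2)) := by
              gcongr
              exact le_mul_of_one_le_left (exp_pos _).le ((one_le_div ht).2 hx)
          _ = _ := by ring
    _ = exp (-t ^ 2 / 2) / (t * √(2 * π)) := by
        rw [integral_const_mul, integral_Ici_eq_integral_Ioi,
          integral_Ioi_mul_exp_neg_sq_div_two, inv_mul_eq_div]

theorem measure_le_eq_lintegral_map_Ici {Ω : Type*} [MeasurableSpace Ω] {P : Measure Ω}
    [IsFiniteMeasure P] {X Y : Ω → ℝ} (hX : Measurable X) (hY : Measurable Y)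
    (hXY : IndepFun X Y P) {f : ℝ → ℝ} (hf : Measurable f) :
    P {ω | f (Y ω) ≤ X ω} = ∫⁻ y, P.map X (Ici (f y)) ∂P.map Y := by
  have hS : MeasurableSet {p : ℝ × ℝ | f p.1 ≤ p.2} :=
    measurableSet_le (hf.comp measurable_fst) measurable_snd
  have hprod : P.map (fun ω ↦ (Y ω, X ω)) = (P.map Y).prod (P.map X) :=
    (indepFun_iff_map_prod_eq_prod_map_map hY.aemeasurable hX.aemeasurable).mp hXY.symm
  calc P {ω | f (Y ω) ≤ X ω} = P.map (fun ω ↦ (Y ω, X ω)) {p | f p.1 ≤ p.2} :=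
        (Measure.map_apply (hY.prodMk hX) hS).symm
    _ = ∫⁻ y, P.map X (Ici (f y)) ∂P.map Y := by rw [hprod, Measure.prod_apply hS]; rfl

namespace ProbabilityTheory

theorem measurable_gammaPDF (a r : ℝ) : Measurable (gammaPDF a r) :=
  (measurable_gammaPDFReal a r).ennreal_ofReal

theorem ae_pos_gammaMeasure (a r : ℝ) : ∀ᵐ y ∂gammaMeasure a r, 0 < y := by
  rw [gammaMeasure, ae_withDensity_iff (measurable_gammaPDF a r)]
  filter_upwards [volume.ae_ne 0] with y hy hpdf
  exact hy.symm.lt_of_le (not_lt.mp fun hneg ↦ hpdf (gammaPDF_of_neg hneg))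

theorem gammaPDFReal_mul_rpow_mul_exp {α r β l y : ℝ} (hαβ : 0 < α + β) (hrl : 0 < r + l)
    (hy : 0 < y) :
    gammaPDFReal α r y * (y ^ β * exp (-(l * y))) =
      r ^ α * Gamma (α + β) / (Gamma α * (r + l) ^ (α + β)) *
        gammaPDFReal (α + β) (r + l) y := by
  have hΓ := (Gamma_pos_of_pos hαβ).ne'
  have hpow := (rpow_pos_of_pos hrl (α + β)).ne'
  rw [gammaPDFReal, gammaPDFReal, if_pos hy.le, if_pos hy.le,
    show α + β - 1 = α - 1 + β by ring, rpow_add hy, add_mul, neg_add, exp_add]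
  field_simp

theorem lintegral_rpow_mul_exp_gammaMeasure {α r β l : ℝ} (hα : 0 < α) (hr : 0 < r)
    (hαβ : 0 < α + β) (hrl : 0 < r + l) :
    ∫⁻ y, ENNReal.ofReal (y ^ β * exp (-(l * y))) ∂gammaMeasure α r =
      ENNReal.ofReal (r ^ α * Gamma (α + β) / (Gamma α * (r + l) ^ (α + β))) := by
  have hC : 0 ≤ r ^ α * Gamma (α + β) / (Gamma α * (r + l) ^ (α + β)) := by
    have := Gamma_pos_of_pos hα
    have := Gamma_pos_of_pos hαβ
    positivity
  rw [gammaMeasure, lintegral_withDensity_eq_lintegral_mul _ (measurable_gammaPDF α r)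
    (by fun_prop)]
  calc ∫⁻ y, (gammaPDF α r * fun y ↦ ENNReal.ofReal (y ^ β * exp (-(l * y)))) y
      = ∫⁻ y, ENNReal.ofReal (r ^ α * Gamma (α + β) / (Gamma α * (r + l) ^ (α + β))) *
          gammaPDF (α + β) (r + l) y := by
        refine lintegral_congr_ae ?_
        filter_upwards [volume.ae_ne 0] with y hy
        rcases hy.lt_or_gt with hneg | hpos
        · simp [gammaPDF_of_neg hneg]
        · simp only [Pi.mul_apply, gammaPDF]
          rw [← ENNReal.ofReal_mul (gammaPDFReal_nonneg hα hr y), ← ENNReal.ofReal_mul hC,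
            gammaPDFReal_mul_rpow_mul_exp hαβ hrl hpos]
    _ = _ := by
        rw [lintegral_const_mul _ (measurable_gammaPDF _ _),
          lintegral_gammaPDF_eq_one hαβ hrl, mul_one]

theorem lintegral_gaussianReal_Ici_sqrt_mul_gammaMeasure_le {α a : ℝ} (hα : 1 / 2 < α)
    (ha : 0 < a) :
    ∫⁻ y, gaussianReal 0 1 (Ici √(y * a)) ∂gammaMeasure α (1 / 2) ≤
      ENNReal.ofReal
        (Gamma (α - 1 / 2) / (2 * √(π * a) * Gamma α * (1 + a) ^ (α - 1 / 2))) := by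
  have hbound : ∀ᵐ y ∂gammaMeasure α (1 / 2), gaussianReal 0 1 (Ici √(y * a)) ≤
      ENNReal.ofReal (√(2 * π * a))⁻¹ *
        ENNReal.ofReal (y ^ (-(1 / 2) : ℝ) * exp (-(a / 2 * y))) := by
    filter_upwards [ae_pos_gammaMeasure α (1 / 2)] with y hy
    have hya : 0 < y * a := mul_pos hy ha
    refine (gaussianReal_Ici_le (sqrt_pos.mpr hya)).trans_eq ?_
    rw [← ENNReal.ofReal_mul (by positivity), sq_sqrt hya.le, rpow_neg hy.le, ← sqrt_eq_rpow,
      sqrt_mul hy.le a, sqrt_mul (by positivity : (0 : ℝ) ≤ 2 * π) a]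
    congr 1
    field_simp
  calc ∫⁻ y, gaussianReal 0 1 (Ici √(y * a)) ∂gammaMeasure α (1 / 2)
      ≤ ∫⁻ y, ENNReal.ofReal (√(2 * π * a))⁻¹ *
          ENNReal.ofReal (y ^ (-(1 / 2) : ℝ) * exp (-(a / 2 * y))) ∂gammaMeasure α (1 / 2) :=
        lintegral_mono_ae hbound
    _ = _ := by
      rw [lintegral_const_mul' _ _ ENNReal.ofReal_ne_top,
        lintegral_rpow_mul_exp_gammaMeasure (by linarith) one_half_pos (by linarith)
          (by positivity), ← ENNReal.ofReal_mul (by positivity)]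
      congr 1
      rw [show (1 : ℝ) / 2 + a / 2 = (1 + a) / 2 by ring, div_rpow zero_le_one zero_le_two,
        one_rpow, div_rpow (by linarith) zero_le_two, ← sub_eq_add_neg, rpow_sub zero_lt_two,
        ← sqrt_eq_rpow, mul_assoc 2 π a, sqrt_mul zero_le_two]
      field_simp
      rw [sq_sqrt zero_le_two]

end ProbabilityTheory

theorem t_tail_bound {Ω : Type*} [MeasurableSpace Ω] (P : Measure Ω) [IsProbabilityMeasure P]
    (d : ℕ) (hd : 2 ≤ d) (s : ℝ) (hs : 1 < s)
    (X Y : Ω → ℝ) (hXm : Measurable X) (hYm : Measurable Y)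
    (hXY : IndepFun X Y P)
    (hX : Measure.map X P = gaussianReal 0 1)
    (hY : Measure.map Y P = gammaMeasure ((d : ℝ) / 2) (1 / 2)) :
    P {ω | Real.sqrt (Y ω * (s ^ ((2 : ℝ) / ((d : ℝ) - 1)) - 1)) ≤ X ω}
      ≤ ENNReal.ofReal (1 / (2 * s * Real.sqrt (Real.log s))) := by
  have hd' : (2 : ℝ) ≤ d := by exact_mod_cast hd
  have hd1 : (0 : ℝ) < d - 1 := by linarith
  set a := s ^ ((2 : ℝ) / ((d : ℝ) - 1)) - 1
  have ha : 0 < a := sub_pos.mpr (one_lt_rpow hs (by positivity))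
  have hs_eq : (1 + a) ^ ((d : ℝ) / 2 - 1 / 2) = s := by
    rw [add_sub_cancel, ← rpow_mul (by linarith),
      show 2 / ((d : ℝ) - 1) * (d / 2 - 1 / 2) = 1 by field_simp [hd1.ne'], rpow_one]
  have hlog : log s ≤ ((d : ℝ) / 2 - 1 / 2) * a := by
    rw [← hs_eq, log_rpow (by linarith)]
    refine mul_le_mul_of_nonneg_left ?_ (by linarith)
    linarith [log_le_sub_one_of_pos (show 0 < 1 + a by linarith)]
  calc P {ω | √(Y ω * a) ≤ X ω}
      = ∫⁻ y, gaussianReal 0 1 (Ici √(y * a)) ∂gammaMeasure ((d : ℝ) / 2) (1 / 2) :=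
        (measure_le_eq_lintegral_map_Ici hXm hYm hXY (f := fun y ↦ √(y * a))
          (by fun_prop)).trans (by rw [hX, hY])
    _ ≤ _ := lintegral_gaussianReal_Ici_sqrt_mul_gammaMeasure_le (by linarith) ha
    _ ≤ _ := by
        rw [hs_eq]
        exact ENNReal.ofReal_le_ofReal
          (Gamma_sub_half_div_le_one_div_sqrt_log (by linarith) ha hs hlog)
end

section
/- For every integer d ≥ 2, the Gamma function satisfies Γ((d−1)/2) / Γ(d/2) ≤ √(2π/d). -/
/-!
Log-convexity of `Γ` on `(0, ∞)` gives `Γ(s - 1/2)² ≤ Γ(s - 1) Γ(s) = Γ(s)² / (s - 1)`. With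
`s = d/2` the ratio is therefore at most `√(2 / (d - 2))`, which is below `√(2π / d)` as soon as
`d ≥ 3` because `π > 3`. For `d = 2` both sides equal `√π`.
-/

namespace Real

theorem Gamma_sub_half_le_Gamma_div_sqrt {s : ℝ} (hs : 1 < s) :
    Gamma (s - 1 / 2) ≤ Gamma s / √(s - 1) := by
  have hs₁ : 0 < s - 1 := by linarith
  have hΓ : Gamma (s - 1) = Gamma s / (s - 1) := by
    rw [eq_div_iff hs₁.ne', mul_comm, ← Gamma_add_one hs₁.ne', sub_add_cancel]
  calc Gamma (s - 1 / 2) = Gamma (1 / 2 * (s - 1) + 1 / 2 * s) := by ring_nf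
    _ ≤ Gamma (s - 1) ^ (1 / 2 : ℝ) * Gamma s ^ (1 / 2 : ℝ) :=
      Gamma_mul_add_mul_le_rpow_Gamma_mul_rpow_Gamma hs₁ (by linarith) one_half_pos
        one_half_pos (by norm_num)
    _ = √(Gamma s ^ 2 / (s - 1)) := by
      rw [← mul_rpow (Gamma_pos_of_pos hs₁).le (Gamma_pos_of_pos (by linarith)).le,
        ← sqrt_eq_rpow, hΓ, div_mul_eq_mul_div, ← sq]
    _ = Gamma s / √(s - 1) := by
      rw [sqrt_div' _ hs₁.le, sqrt_sq (Gamma_pos_of_pos (by linarith)).le]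

theorem Gamma_ratio_le_of_three_le {x : ℝ} (hx : 3 ≤ x) :
    Gamma ((x - 1) / 2) / Gamma (x / 2) ≤ √(2 * π / x) := by
  have hx₂ : 0 < x / 2 - 1 := by linarith
  calc Gamma ((x - 1) / 2) / Gamma (x / 2) ≤ (√(x / 2 - 1))⁻¹ := by
        rw [div_le_iff₀ (Gamma_pos_of_pos (by linarith)), inv_mul_eq_div,
          show (x - 1) / 2 = x / 2 - 1 / 2 by ring]
        exact Gamma_sub_half_le_Gamma_div_sqrt (by linarith)
    _ = √(2 / (x - 2)) := by
        rw [← sqrt_inv]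
        congr 1
        field_simp
    _ ≤ √(2 * π / x) := by
        apply sqrt_le_sqrt
        rw [div_le_div_iff₀ (by linarith) (by linarith)]
        nlinarith [pi_gt_three]

end Real

theorem gamma_ratio_le (d : ℕ) (hd : 2 ≤ d) :
    Real.Gamma ((d - 1) / 2) / Real.Gamma (d / 2) ≤ Real.sqrt (2 * Real.pi / d) := by
  obtain rfl | hd₃ := hd.eq_or_lt
  · norm_num [Real.Gamma_one_half_eq]
  · exact Real.Gamma_ratio_le_of_three_le (by exact_mod_cast hd₃)
end

section
/- For every real G > 0 and every ε ∈ [0, 1/2], the inequality 1 / log(1 + G(1−ε)²/(1+ε)) ≤ 1/log(1+G) + 10 G ε / ( (1+G) (log(1+G))² ) holds. -/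
/-!
Let `a = G(1-ε)²/(1+ε)` and `y = ratioGap G ε`, so that `1 + G = (1 + a)(1 + y)` and
`L = log (1 + G)` splits as `t + δ` with `t = log (1 + a)`, `δ = log (1 + y)`. For
`c = 10Gε/(1+G)` the claim `1/t ≤ 1/L + c/L²` follows from `1/L + 1/c ≤ 1/δ`. The Padé bound
`log (1 + y) ≤ y(6+y)/(6+4y)` gives `1/δ ≥ 1/y + 3/(6+y)`, and the Padé lower bound
`log (1 + x) ≥ x(6+3x)/(6+6x+x²)`, applied to `x = G` for `G ≤ 1` and to `x = (G-1)/2` after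
splitting off `log 2` for `G ≥ 1`, turns what remains into a rational inequality in `G` and `ε`.
The claim is asymptotically sharp as `G → 0` with `ε = 1/2`, which is why second-order Padé
bounds are needed.
-/

open Real

lemma nonneg_of_hasDerivAt_nonneg {f f' : ℝ → ℝ} (h0 : f 0 = 0)
    (hf : ∀ x, 0 ≤ x → HasDerivAt f (f' x) x) (hf' : ∀ x, 0 < x → 0 ≤ f' x)
    {x : ℝ} (hx : 0 ≤ x) : 0 ≤ f x := by
  have hmono : MonotoneOn f (Set.Ici 0) := by
    refine monotoneOn_of_hasDerivWithinAt_nonneg (f' := f') (convex_Ici 0)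
      (fun y hy => (hf y hy).continuousAt.continuousWithinAt) (fun y hy => ?_) (fun y hy => ?_)
    all_goals rw [interior_Ici] at hy
    · exact (hf y hy.le).hasDerivWithinAt
    · exact hf' y hy
  simpa [h0] using hmono Set.self_mem_Ici hx hx

lemma hasDerivAt_log_one_add {x : ℝ} (hx : -1 < x) :
    HasDerivAt (fun z => log (1 + z)) (1 / (1 + x)) x := by
  simpa using ((hasDerivAt_id x).const_add 1).log (by linarith : 0 < 1 + x).ne'

lemma log_one_add_le_div {x : ℝ} (hx : 0 ≤ x) :
    log (1 + x) ≤ x * (6 + x) / (6 + 4 * x) := by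
  have key := nonneg_of_hasDerivAt_nonneg
    (f := fun z => z * (6 + z) / (6 + 4 * z) - log (1 + z))
    (f' := fun z => 4 * z ^ 3 / ((6 + 4 * z) ^ 2 * (1 + z))) (by simp) (fun z hz => ?_)
    (fun z hz => by positivity) hx
  · simpa using key
  have hnum : HasDerivAt (fun z => z * (6 + z)) (6 + 2 * z) z :=
    ((hasDerivAt_id z).mul ((hasDerivAt_id z).const_add 6)).congr_deriv (by simp; ring)
  have hden : HasDerivAt (fun z => 6 + 4 * z) 4 z := by
    simpa using ((hasDerivAt_id z).const_mul 4).const_add 6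
  refine ((hnum.div hden (by positivity)).sub
    (hasDerivAt_log_one_add (by linarith))).congr_deriv ?_
  field_simp
  ring

lemma div_le_log_one_add {x : ℝ} (hx : 0 ≤ x) :
    x * (6 + 3 * x) / (6 + 6 * x + x ^ 2) ≤ log (1 + x) := by
  have key := nonneg_of_hasDerivAt_nonneg
    (f := fun z => log (1 + z) - z * (6 + 3 * z) / (6 + 6 * z + z ^ 2))
    (f' := fun z => z ^ 4 / ((1 + z) * (6 + 6 * z + z ^ 2) ^ 2)) (by simp) (fun z hz => ?_)
    (fun z hz => by positivity) hx
  · simpa using key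
  have hnum : HasDerivAt (fun z => z * (6 + 3 * z)) (6 + 6 * z) z :=
    ((hasDerivAt_id z).mul (((hasDerivAt_id z).const_mul 3).const_add 6)).congr_deriv
      (by simp; ring)
  have hden : HasDerivAt (fun z => 6 + 6 * z + z ^ 2) (6 + 2 * z) z :=
    ((((hasDerivAt_id z).const_mul 6).const_add 6).add (hasDerivAt_pow 2 z)).congr_deriv
      (by simp)
  refine ((hasDerivAt_log_one_add (by linarith)).sub
    (hnum.div hden (by positivity))).congr_deriv ?_
  field_simp
  ring

lemma one_div_add_le_one_div_log_one_add {y : ℝ} (hy : 0 < y) :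
    1 / y + 3 / (6 + y) ≤ 1 / log (1 + y) := by
  calc 1 / y + 3 / (6 + y) = 1 / (y * (6 + y) / (6 + 4 * y)) := by field_simp; ring
    _ ≤ 1 / log (1 + y) :=
      one_div_le_one_div_of_le (log_pos (by linarith)) (log_one_add_le_div hy.le)

lemma add_div_le_log_one_add_of_one_le {G : ℝ} (hG : 1 ≤ G) :
    693 / 1000 + 3 * (G - 1) * (G + 3) / (G ^ 2 + 10 * G + 13) ≤ log (1 + G) := by
  obtain ⟨x, hx, rfl⟩ : ∃ x, 0 ≤ x ∧ G = 1 + 2 * x := ⟨(G - 1) / 2, by linarith, by ring⟩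
  have hsplit : log (1 + (1 + 2 * x)) = log 2 + log (1 + x) := by
    rw [← log_mul two_ne_zero (by positivity)]
    ring_nf
  have hpade : 3 * (1 + 2 * x - 1) * (1 + 2 * x + 3) /
      ((1 + 2 * x) ^ 2 + 10 * (1 + 2 * x) + 13) = x * (6 + 3 * x) / (6 + 6 * x + x ^ 2) := by
    field_simp
    ring
  rw [hsplit, hpade]
  gcongr
  · linarith [log_two_gt_d9]
  · exact div_le_log_one_add hx

lemma one_div_le_one_div_add_div_sq {t δ c : ℝ} (ht : 0 < t) (hδ : 0 < δ) (hc : 0 < c)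
    (h : 1 / (t + δ) + 1 / c ≤ 1 / δ) : 1 / t ≤ 1 / (t + δ) + c / (t + δ) ^ 2 := by
  rw [div_add_div _ _ (by positivity) hc.ne', div_le_div_iff₀ (by positivity) hδ] at h
  rw [div_add_div _ _ (by positivity) (by positivity), div_le_div_iff₀ ht (by positivity)]
  nlinarith

lemma exists_nonneg_eq_one_div_one_add {x : ℝ} (hx : 0 < x) (hx1 : x ≤ 1) :
    ∃ u, 0 ≤ u ∧ x = 1 / (1 + u) :=
  ⟨1 / x - 1, by rw [sub_nonneg, le_one_div one_pos hx]; simpa using hx1, by field_simp; ring⟩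

lemma exists_nonneg_eq_one_div_two_mul {ε : ℝ} (hε : 0 < ε) (hε1 : ε ≤ 1 / 2) :
    ∃ r, 0 ≤ r ∧ ε = 1 / (2 * (1 + r)) := by
  obtain ⟨r, hr, h⟩ :=
    exists_nonneg_eq_one_div_one_add (x := 2 * ε) (by positivity) (by linarith)
  exact ⟨r, hr, by field_simp at h ⊢; linarith⟩

noncomputable def ratioGap (G ε : ℝ) : ℝ := G * ε * (3 - ε) / (1 + ε + G * (1 - ε) ^ 2)

lemma ratioGap_pos {G ε : ℝ} (hG : 0 < G) (hε : 0 < ε) (hε3 : ε < 3) : 0 < ratioGap G ε := by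
  unfold ratioGap
  have : 0 < 3 - ε := by linarith
  positivity

lemma one_add_mul_one_add_ratioGap {G ε : ℝ} (hG : 0 ≤ G) (hε : 0 ≤ ε) :
    (1 + G * (1 - ε) ^ 2 / (1 + ε)) * (1 + ratioGap G ε) = 1 + G := by
  unfold ratioGap
  field_simp
  ring

lemma ratioGap_one_div_two_mul {G r : ℝ} (hG : 0 ≤ G) (hr : 0 ≤ r) :
    ratioGap G (1 / (2 * (1 + r))) =
      G * (5 + 6 * r) / (6 + 10 * r + 4 * r ^ 2 + G * (1 + 2 * r) ^ 2) := by
  unfold ratioGap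
  field_simp
  ring

/-- With `G = 1 / (1 + u)` and `ε = 1 / (2 * (1 + r))`, clearing denominators leaves a polynomial
in `u, r ≥ 0` with nonnegative coefficients. -/
lemma one_div_pade_add_le_of_le_one {G ε : ℝ} (hG : 0 < G) (hG1 : G ≤ 1) (hε : 0 < ε)
    (hε1 : ε ≤ 1 / 2) :
    1 / (G * (6 + 3 * G) / (6 + 6 * G + G ^ 2)) + (1 + G) / (10 * G * ε) ≤
      1 / ratioGap G ε + 3 / (6 + ratioGap G ε) := by
  obtain ⟨u, hu, rfl⟩ := exists_nonneg_eq_one_div_one_add hG hG1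
  obtain ⟨r, hr, rfl⟩ := exists_nonneg_eq_one_div_two_mul hε hε1
  rw [ratioGap_one_div_two_mul (by positivity) hr, ← sub_nonneg]
  field_simp
  ring_nf
  positivity

/-- As above, now with `G = 1 + u`. -/
lemma one_div_pade_add_le_of_one_le {G ε : ℝ} (hG : 1 ≤ G) (hε : 0 < ε) (hε1 : ε ≤ 1 / 2) :
    1 / (693 / 1000 + 3 * (G - 1) * (G + 3) / (G ^ 2 + 10 * G + 13)) + (1 + G) / (10 * G * ε) ≤
      1 / ratioGap G ε + 3 / (6 + ratioGap G ε) := by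
  obtain ⟨u, hu, rfl⟩ : ∃ u, 0 ≤ u ∧ G = 1 + u := ⟨G - 1, by linarith, by ring⟩
  obtain ⟨r, hr, rfl⟩ := exists_nonneg_eq_one_div_two_mul hε hε1
  rw [ratioGap_one_div_two_mul (by positivity) hr, add_sub_cancel_left, ← sub_nonneg]
  field_simp
  ring_nf
  positivity

lemma one_div_log_add_le {G ε : ℝ} (hG : 0 < G) (hε : 0 < ε) (hε1 : ε ≤ 1 / 2) :
    1 / log (1 + G) + (1 + G) / (10 * G * ε) ≤ 1 / ratioGap G ε + 3 / (6 + ratioGap G ε) := by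
  rcases le_total G 1 with hG1 | hG1
  · refine le_trans ?_ (one_div_pade_add_le_of_le_one hG hG1 hε hε1)
    gcongr
    exact div_le_log_one_add hG.le
  · refine le_trans ?_ (one_div_pade_add_le_of_one_le hG1 hε hε1)
    gcongr
    exact add_div_le_log_one_add_of_one_le hG1

theorem log_expansion_bound (G ε : ℝ) (hG : 0 < G) (hε0 : 0 ≤ ε) (hε1 : ε ≤ 1 / 2) :
    1 / Real.log (1 + G * (1 - ε) ^ 2 / (1 + ε)) ≤
      1 / Real.log (1 + G) + 10 * G * ε / ((1 + G) * (Real.log (1 + G)) ^ 2) := by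
  rcases hε0.eq_or_lt with rfl | hε
  · simp
  have ha : 0 < G * (1 - ε) ^ 2 / (1 + ε) := by
    have : 0 < 1 - ε := by linarith
    positivity
  have hy : 0 < ratioGap G ε := ratioGap_pos hG hε (by linarith)
  have hsplit : log (1 + G) = log (1 + G * (1 - ε) ^ 2 / (1 + ε)) + log (1 + ratioGap G ε) := by
    rw [← log_mul (by positivity) (by positivity), one_add_mul_one_add_ratioGap hG.le hε0]
  have key := one_div_le_one_div_add_div_sq (log_pos (lt_add_of_pos_right 1 ha))
    (log_pos (lt_add_of_pos_right 1 hy)) (by positivity : 0 < 10 * G * ε / (1 + G)) (by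
      rw [← hsplit, one_div_div]
      exact (one_div_log_add_le hG hε hε1).trans (one_div_add_le_one_div_log_one_add hy))
  rwa [← hsplit, div_div] at key
end

section
/- For every real x ∈ [0, 1], the inequality e^x / (1+x) ≥ (1 + x²/8)² holds. -/
theorem exp_div_one_add_ge (x : ℝ) (hx0 : 0 ≤ x) (hx1 : x ≤ 1) :
    (1 + x ^ 2 / 8) ^ 2 ≤ Real.exp x / (1 + x) := by
  have hx : (0:ℝ) < 1 + x := by linarith
  rw [le_div_iff₀ hx]
  have h := Real.sum_le_exp_of_nonneg hx0 4
  simp [Finset.sum_range_succ, Nat.factorial] at h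
  nlinarith [sq_nonneg x, pow_nonneg hx0 3, pow_nonneg hx0 4, pow_nonneg hx0 5, sq_nonneg (1 - x)]
end

section
/- Let d ≥ 5 be an integer and c > 0 a real number. Let X and Y be independent random variables, X having the standard Gaussian distribution N(0,1) and Y having the chi-square distribution with d degrees of freedom (the Gamma distribution with shape d/2 and rate 1/2). Then P( d X² / Y ≥ c ) ≤ 3 d² / ( c² (d−2)(d−4) ). -/
open MeasureTheory ProbabilityTheory Real Set
open scoped ENNReal

/-! Markov's inequality for the square gives `P(d X² / Y ≥ c) ≤ E[(d X² / Y)²] / c²`, and by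
independence `E[(d X² / Y)²] = d² E[X⁴] E[Y⁻²]`. Both factors are Gamma integrals: the Gaussian
fourth moment is `3`, and the negative moment `E[Y⁻²] = 1 / ((d - 2) (d - 4))` of the chi-square law
is finite precisely because `d > 4`. -/

theorem lintegral_ofReal_rpow_gammaMeasure {a r q : ℝ} (ha : 0 < a) (hr : 0 < r) (haq : 0 < a + q) :
    ∫⁻ y, ENNReal.ofReal (y ^ q) ∂gammaMeasure a r
      = ENNReal.ofReal (r ^ (-q) * Gamma (a + q) / Gamma a) := by
  have hGamma := Gamma_pos_of_pos ha
  have hdensity : ∀ y ∈ Ioi (0 : ℝ), gammaPDF a r y * ENNReal.ofReal (y ^ q)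
      = ENNReal.ofReal (r ^ a / Gamma a * (y ^ (a + q - 1) * exp (-(r * y)))) := by
    intro y (hy : 0 < y)
    rw [gammaPDF_of_nonneg hy.le, ← ENNReal.ofReal_mul (by positivity),
      show a + q - 1 = a - 1 + q by ring, rpow_add hy]
    ring_nf
  have hsupport : Function.support (fun y ↦ gammaPDF a r y * ENNReal.ofReal (y ^ q)) ⊆ Ici 0 :=
    fun y hy ↦ mem_Ici.mpr <| not_lt.mp fun hneg ↦ hy (by simp [gammaPDF_of_neg hneg])
  have hint : IntegrableOn (fun y ↦ y ^ (a + q - 1) * exp (-(r * y))) (Ioi 0) := by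
    simpa [rpow_one] using
      integrableOn_rpow_mul_exp_neg_mul_rpow (by linarith : -1 < a + q - 1) one_pos hr
  have hpdf : Measurable (gammaPDF a r) := (measurable_gammaPDFReal a r).ennreal_ofReal
  rw [gammaMeasure, lintegral_withDensity_eq_lintegral_mul _ hpdf (by fun_prop)]
  simp only [Pi.mul_apply]
  rw [← setLIntegral_eq_of_support_subset hsupport, ← setLIntegral_congr Ioi_ae_eq_Ici,
    setLIntegral_congr_fun measurableSet_Ioi hdensity,
    ← ofReal_integral_eq_lintegral_ofReal (hint.const_mul _)
      ((ae_restrict_iff' measurableSet_Ioi).mpr (ae_of_all _ fun y (hy : 0 < y) ↦ by positivity)),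
    integral_const_mul, integral_rpow_mul_exp_neg_mul_Ioi haq hr,
    one_div, inv_rpow hr.le, ← rpow_neg hr.le, show -q = a + -(a + q) by ring, rpow_add hr]
  ring_nf

theorem lintegral_ofReal_inv_sq_chiSquared {k : ℝ} (hk : 4 < k) :
    ∫⁻ y, ENNReal.ofReal ((y ^ 2)⁻¹) ∂gammaMeasure (k / 2) (1 / 2)
      = ENNReal.ofReal (1 / ((k - 2) * (k - 4))) := by
  have hGamma : Gamma (k / 2) = (k / 2 - 1) * ((k / 2 - 2) * Gamma (k / 2 + -2)) := by
    rw [show k / 2 = k / 2 + -2 + 1 + 1 by ring, Gamma_add_one (by linarith),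
      Gamma_add_one (by linarith)]
    ring_nf
  have hGamma_pos : 0 < Gamma (k / 2 + -2) := Gamma_pos_of_pos (by linarith)
  have hinv : ∀ y : ℝ, (y ^ 2)⁻¹ = y ^ (-2 : ℝ) := fun y ↦ by simp [rpow_neg_ofNat]
  simp_rw [hinv]
  rw [lintegral_ofReal_rpow_gammaMeasure (by linarith) one_half_pos (by linarith), hGamma, neg_neg,
    rpow_two]
  have h1 : k / 2 - 1 ≠ 0 := by linarith
  have h2 : k / 2 - 2 ≠ 0 := by linarith
  generalize Gamma (k / 2 + -2) = G at hGamma_pos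
  congr 1
  field_simp
  ring

theorem integral_abs_rpow_gaussianReal {q : ℝ} (hq : -1 < q) :
    ∫ x, |x| ^ q ∂gaussianReal 0 1 = 2 ^ (q / 2) * Gamma ((q + 1) / 2) / √π := by
  have hpdf : ∀ x, gaussianPDFReal 0 1 x = (√(2 * π))⁻¹ * exp (-(1 / 2) * |x| ^ (2 : ℝ)) := by
    intro x
    simp only [gaussianPDFReal_def, NNReal.coe_one, mul_one, sub_zero, rpow_two, sq_abs]
    ring_nf
  simp_rw [integral_gaussianReal_eq_integral_smul one_ne_zero, smul_eq_mul, hpdf, mul_assoc,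
    integral_const_mul]
  rw [integral_comp_abs (f := fun x ↦ exp (-(1 / 2) * x ^ (2 : ℝ)) * x ^ q)]
  simp_rw [mul_comm (rexp _)]
  rw [integral_rpow_mul_exp_neg_mul_rpow two_pos hq one_half_pos, one_div, inv_rpow zero_le_two,
    ← rpow_neg zero_le_two, neg_div, neg_neg, add_div, rpow_add two_pos, ← sqrt_eq_rpow,
    sqrt_mul zero_le_two]
  field_simp

theorem lintegral_ofReal_pow_four_gaussianReal :
    ∫⁻ x, ENNReal.ofReal (x ^ 4) ∂gaussianReal 0 1 = ENNReal.ofReal 3 := by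
  have hpow : ∀ x : ℝ, x ^ 4 = |x| ^ (4 : ℝ) := fun x ↦ by
    rw [rpow_ofNat, Even.pow_abs (by decide)]
  have hint : Integrable (fun x : ℝ ↦ x ^ 4) (gaussianReal 0 1) := by
    simpa [Even.pow_abs (show Even 4 by decide)] using
      (memLp_id_gaussianReal 4).integrable_norm_pow four_ne_zero
  have hGamma : Gamma (5 / 2) = 3 / 4 * √π := by
    rw [show (5 / 2 : ℝ) = 1 / 2 + 1 + 1 by norm_num, Gamma_add_one (by norm_num),
      Gamma_add_one (by norm_num), Gamma_one_half_eq]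
    ring
  rw [← ofReal_integral_eq_lintegral_ofReal hint (ae_of_all _ fun x ↦ by positivity)]
  simp_rw [hpow]
  rw [integral_abs_rpow_gaussianReal (by norm_num)]
  norm_num [hGamma]
  field_simp

theorem ProbabilityTheory.IndepFun.lintegral_comp_mul_comp {Ω α β : Type*} [MeasurableSpace Ω]
    [MeasurableSpace α] [MeasurableSpace β] {P : Measure Ω} {X : Ω → α} {Y : Ω → β}
    (hXY : IndepFun X Y P) (hX : Measurable X) (hY : Measurable Y) {f : α → ℝ≥0∞} {g : β → ℝ≥0∞}
    (hf : Measurable f) (hg : Measurable g) :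
    ∫⁻ ω, f (X ω) * g (Y ω) ∂P = (∫⁻ x, f x ∂P.map X) * ∫⁻ y, g y ∂P.map Y := by
  rw [lintegral_map hf hX, lintegral_map hg hY]
  exact lintegral_mul_eq_lintegral_mul_lintegral_of_indepFun (hf.comp hX) (hg.comp hY)
    (hXY.comp hf hg)

theorem meas_ge_le_lintegral_ofReal_sq_div {Ω : Type*} [MeasurableSpace Ω] {μ : Measure Ω}
    {T : Ω → ℝ} (hT : AEMeasurable T μ) {c : ℝ} (hc : 0 < c) :
    μ {ω | c ≤ T ω} ≤ (∫⁻ ω, ENNReal.ofReal (T ω ^ 2) ∂μ) / ENNReal.ofReal (c ^ 2) :=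
  calc μ {ω | c ≤ T ω} ≤ μ {ω | ENNReal.ofReal (c ^ 2) ≤ ENNReal.ofReal (T ω ^ 2)} :=
        measure_mono fun ω (h : c ≤ T ω) ↦ ENNReal.ofReal_le_ofReal (pow_le_pow_left₀ hc.le h 2)
    _ ≤ _ := meas_ge_le_lintegral_div (hT.pow_const 2).ennreal_ofReal
        (by simpa using hc.ne') ENNReal.ofReal_ne_top

theorem lintegral_ofReal_sq_mul_sq_div_of_gaussian_chiSquared {Ω : Type*} [MeasurableSpace Ω]
    {P : Measure Ω} {X Y : Ω → ℝ} (hXm : Measurable X) (hYm : Measurable Y) (hXY : IndepFun X Y P)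
    (hX : P.map X = gaussianReal 0 1) {k : ℝ} (hk : 4 < k)
    (hY : P.map Y = gammaMeasure (k / 2) (1 / 2)) :
    ∫⁻ ω, ENNReal.ofReal ((k * X ω ^ 2 / Y ω) ^ 2) ∂P
      = ENNReal.ofReal (3 * k ^ 2 / ((k - 2) * (k - 4))) := by
  -- valid also where `Y ω = 0`: both sides vanish, as `x / 0 = 0` and `0⁻¹ = 0`
  have hsplit : ∀ ω, ENNReal.ofReal ((k * X ω ^ 2 / Y ω) ^ 2)
      = ENNReal.ofReal (k ^ 2) * (ENNReal.ofReal (X ω ^ 4) * ENNReal.ofReal ((Y ω ^ 2)⁻¹)) := by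
    intro ω
    rw [← ENNReal.ofReal_mul (by positivity), ← ENNReal.ofReal_mul (by positivity)]
    ring_nf
  simp_rw [hsplit]
  rw [lintegral_const_mul _ (by fun_prop),
    hXY.lintegral_comp_mul_comp (f := fun x ↦ ENNReal.ofReal (x ^ 4))
      (g := fun y ↦ ENNReal.ofReal ((y ^ 2)⁻¹)) hXm hYm (by fun_prop) (by fun_prop),
    hX, hY, lintegral_ofReal_pow_four_gaussianReal, lintegral_ofReal_inv_sq_chiSquared hk,
    ← ENNReal.ofReal_mul (by norm_num), ← ENNReal.ofReal_mul (by positivity)]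
  congr 1
  ring

theorem student_t_sq_tail_general {Ω : Type*} [MeasurableSpace Ω] (P : Measure Ω)
    (d : ℕ) (hd : 5 ≤ d) (c : ℝ) (hc : 0 < c)
    (X Y : Ω → ℝ) (hXm : Measurable X) (hYm : Measurable Y)
    (hXY : IndepFun X Y P)
    (hX : Measure.map X P = gaussianReal 0 1)
    (hY : Measure.map Y P = gammaMeasure ((d : ℝ) / 2) (1 / 2)) :
    P {ω | c ≤ (d : ℝ) * X ω ^ 2 / Y ω}
      ≤ ENNReal.ofReal (3 * (d : ℝ) ^ 2 / (c ^ 2 * ((d : ℝ) - 2) * ((d : ℝ) - 4))) := by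
  have hd4 : (4 : ℝ) < d := by exact_mod_cast hd
  calc P {ω | c ≤ (d : ℝ) * X ω ^ 2 / Y ω}
      ≤ (∫⁻ ω, ENNReal.ofReal (((d : ℝ) * X ω ^ 2 / Y ω) ^ 2) ∂P) / ENNReal.ofReal (c ^ 2) :=
        meas_ge_le_lintegral_ofReal_sq_div (by fun_prop) hc
    _ = ENNReal.ofReal (3 * (d : ℝ) ^ 2 / ((d - 2) * (d - 4))) / ENNReal.ofReal (c ^ 2) := by
        rw [lintegral_ofReal_sq_mul_sq_div_of_gaussian_chiSquared hXm hYm hXY hX hd4 hY]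
    _ = _ := by
        rw [← ENNReal.ofReal_div_of_pos (by positivity), div_div]
        congr 2
        ring

theorem student_t_sq_tail {Ω : Type*} [MeasurableSpace Ω] (P : Measure Ω)
    [IsProbabilityMeasure P] (d : ℕ) (hd : 5 ≤ d) (c : ℝ) (hc : 0 < c)
    (X Y : Ω → ℝ) (hXm : Measurable X) (hYm : Measurable Y)
    (hXY : IndepFun X Y P)
    (hX : Measure.map X P = gaussianReal 0 1)
    (hY : Measure.map Y P = gammaMeasure ((d : ℝ) / 2) (1 / 2)) :
    P {ω | c ≤ (d : ℝ) * X ω ^ 2 / Y ω}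
      ≤ ENNReal.ofReal (3 * (d : ℝ) ^ 2 / (c ^ 2 * ((d : ℝ) - 2) * ((d : ℝ) - 4))) :=
  student_t_sq_tail_general P d hd c hc X Y hXm hYm hXY hX hY
end

section
/- Let n ≥ 2 be an integer, μ ∈ ℝ, σ > 0 and δ > 0, and let X_1, …, X_n be independent random variables each with the Gaussian distribution N(μ, σ²). Define the sample variance S² = (1/(n−1)) ∑_{i=1}^n (X_i − X̄)² with X̄ = (1/n)∑_{i=1}^n X_i. Then P( S² > (1+δ) σ² ) ≤ ( e^{−δ} (1+δ) )^{(n−1)/2}. -/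
/-!
Standardizing, `Yᵢ = (Xᵢ - μ) / σ`, turns the event into `∑ (Yᵢ - Ȳ)² > (1 + δ) (n - 1)`.
With `u = n^{-1/2} (1, …, 1)` we have `∑ (Yᵢ - Ȳ)² = ‖Y‖² - ⟪u, Y⟫²`, and the standard Gaussian
on `ℝⁿ` is the law of `∑ Wᵢ bᵢ` for i.i.d. standard `Wᵢ` and any orthonormal basis `b`. Taking
`b₀ = u`, the statistic has the law of `∑_{i ≠ 0} Wᵢ²`, a `χ²` variable with `n - 1` degrees of
freedom. Its tail is bounded by Chernoff's method: `E exp (t W²) = (1 - 2t)^{-1/2}` for `t < 1/2`,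
and `t = δ / (2 (1 + δ))` gives the bound.
-/

open MeasureTheory ProbabilityTheory Real Finset WithLp
open scoped ENNReal RealInnerProductSpace

lemma lintegral_exp_mul_sq_gaussianReal {t : ℝ} (ht : t < 1 / 2) :
    ∫⁻ x, ENNReal.ofReal (exp (t * x ^ 2)) ∂gaussianReal 0 1 =
      ENNReal.ofReal ((1 - 2 * t) ^ (-(1 / 2 : ℝ))) := by
  have hα : 0 < 1 / 2 - t := by linarith
  rw [gaussianReal_of_var_ne_zero 0 one_ne_zero,
    lintegral_withDensity_eq_lintegral_mul _ (measurable_gaussianPDF 0 1) (by fun_prop)]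
  have hpdf (x : ℝ) : gaussianPDF 0 1 x * ENNReal.ofReal (exp (t * x ^ 2)) =
      ENNReal.ofReal ((√(2 * π))⁻¹ * exp (-(1 / 2 - t) * x ^ 2)) := by
    rw [gaussianPDF, ← ENNReal.ofReal_mul (gaussianPDFReal_nonneg _ _ _), gaussianPDFReal]
    simp only [NNReal.coe_one, mul_one, sub_zero]
    rw [mul_assoc, ← exp_add]
    congr 3
    ring
  simp_rw [Pi.mul_apply, hpdf]
  rw [← ofReal_integral_eq_lintegral_ofReal ((integrable_exp_neg_mul_sq hα).const_mul _)
    (ae_of_all _ fun _ => by positivity), integral_const_mul, integral_gaussian,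
    ← sqrt_inv, ← sqrt_mul (by positivity),
    show (2 * π)⁻¹ * (π / (1 / 2 - t)) = (1 - 2 * t)⁻¹ by field_simp,
    sqrt_inv, sqrt_eq_rpow, rpow_neg (by linarith)]

lemma measure_lt_le_exp_mul_lintegral_exp {Ω : Type*} [MeasurableSpace Ω] {P : Measure Ω}
    {f : Ω → ℝ} (hf : AEMeasurable f P) {t : ℝ} (ht : 0 ≤ t) (a : ℝ) :
    P {ω | a < f ω} ≤
      ENNReal.ofReal (exp (-(t * a))) * ∫⁻ ω, ENNReal.ofReal (exp (t * f ω)) ∂P := by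
  calc P {ω | a < f ω}
      ≤ P {ω | ENNReal.ofReal (exp (t * a)) ≤ ENNReal.ofReal (exp (t * f ω))} :=
        measure_mono fun ω hω => ENNReal.ofReal_le_ofReal <|
          exp_le_exp.2 <| mul_le_mul_of_nonneg_left (le_of_lt hω) ht
    _ ≤ (∫⁻ ω, ENNReal.ofReal (exp (t * f ω)) ∂P) / ENNReal.ofReal (exp (t * a)) :=
        meas_ge_le_lintegral_div (hf.const_mul t).exp.ennreal_ofReal
          (by simp [exp_pos]) ENNReal.ofReal_ne_top
    _ = _ := by
        rw [ENNReal.div_eq_inv_mul, ← ENNReal.ofReal_inv_of_pos (exp_pos _), exp_neg]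

section IIDStandardGaussian

variable {ι Ω : Type*} [MeasurableSpace Ω] {P : Measure Ω} {Z : ι → Ω → ℝ}

lemma lintegral_exp_mul_sum_sq (hZm : ∀ i, Measurable (Z i)) (hindep : iIndepFun Z P)
    (hlaw : ∀ i, P.map (Z i) = gaussianReal 0 1) (s : Finset ι) {t : ℝ} (ht : t < 1 / 2) :
    ∫⁻ ω, ENNReal.ofReal (exp (t * ∑ i ∈ s, Z i ω ^ 2)) ∂P =
      ENNReal.ofReal ((1 - 2 * t) ^ (-(1 / 2 : ℝ))) ^ #s := by
  have hfactor (ω : Ω) : ENNReal.ofReal (exp (t * ∑ i ∈ s, Z i ω ^ 2)) =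
      ∏ i ∈ s, ENNReal.ofReal (exp (t * Z i ω ^ 2)) := by
    rw [mul_sum, exp_sum, ENNReal.ofReal_prod_of_nonneg fun _ _ => (exp_pos _).le]
  have hmeas : Measurable fun x : ℝ => ENNReal.ofReal (exp (t * x ^ 2)) := by fun_prop
  simp_rw [hfactor]
  rw [lintegral_prod_eq_prod_lintegral_of_indepFun s
    (fun i ω => ENNReal.ofReal (exp (t * Z i ω ^ 2))) (hindep.comp _ fun _ => hmeas)
    fun i => hmeas.comp (hZm i)]
  refine (prod_congr rfl fun i _ => ?_).trans (prod_const _)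
  rw [← lintegral_map hmeas (hZm i), hlaw i, lintegral_exp_mul_sq_gaussianReal ht]

lemma measure_sum_sq_gt_le (hZm : ∀ i, Measurable (Z i)) (hindep : iIndepFun Z P)
    (hlaw : ∀ i, P.map (Z i) = gaussianReal 0 1) (s : Finset ι) {δ : ℝ} (hδ : 0 < δ) :
    P {ω | (1 + δ) * #s < ∑ i ∈ s, Z i ω ^ 2} ≤
      ENNReal.ofReal ((exp (-δ) * (1 + δ)) ^ ((#s : ℝ) / 2)) := by
  set t := δ / (2 * (1 + δ))
  have ht : t < 1 / 2 := by
    rw [div_lt_iff₀ (by positivity)]; linarith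
  refine (measure_lt_le_exp_mul_lintegral_exp (t := t) (by fun_prop)
    (div_nonneg hδ.le (by positivity)) _).trans_eq ?_
  rw [lintegral_exp_mul_sum_sq hZm hindep hlaw s ht,
    ← ENNReal.ofReal_pow (rpow_nonneg (by linarith) _), ← ENNReal.ofReal_mul (exp_pos _).le]
  have h2t : 1 - 2 * t = (1 + δ)⁻¹ := by simp only [t]; field_simp; ring
  have hexp : -(t * ((1 + δ) * #s)) = -δ * ((#s : ℝ) / 2) := by simp only [t]; field_simp
  rw [h2t, hexp, inv_rpow (by positivity), rpow_neg (by positivity), inv_inv, ← rpow_natCast,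
    ← rpow_mul (by positivity), exp_mul, mul_rpow (exp_pos _).le (by positivity),
    one_div_mul_eq_div]

end IIDStandardGaussian

lemma exists_orthonormalBasis_apply_eq {ι : Type*} [Fintype ι] {u : EuclideanSpace ℝ ι}
    (hu : ‖u‖ = 1) (i₀ : ι) :
    ∃ b : OrthonormalBasis ι ℝ (EuclideanSpace ℝ ι), b i₀ = u := by
  have hv : Orthonormal ℝ (({i₀} : Set ι).domRestrict fun _ => u) :=
    ⟨fun _ => hu, fun i j hij => absurd (Subsingleton.elim i j) hij⟩
  obtain ⟨b, hb⟩ := hv.exists_orthonormalBasis_extension_of_card_eq (by simp)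
  exact ⟨b, hb i₀ rfl⟩

lemma map_norm_sq_sub_inner_sq_stdGaussian {ι : Type*} [Fintype ι] [DecidableEq ι]
    {u : EuclideanSpace ℝ ι} (hu : ‖u‖ = 1) (i₀ : ι) :
    (stdGaussian (EuclideanSpace ℝ ι)).map (fun y => ‖y‖ ^ 2 - ⟪u, y⟫ ^ 2) =
      (Measure.pi fun _ : ι => gaussianReal 0 1).map fun w => ∑ i ∈ univ.erase i₀, w i ^ 2 := by
  obtain ⟨b, rfl⟩ := exists_orthonormalBasis_apply_eq hu i₀
  rw [stdGaussian_eq_map_pi_orthonormalBasis b, Measure.map_map (by fun_prop) (by fun_prop)]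
  congr 1
  funext w
  have hsum : ∑ i, w i • b i = b.repr.symm (toLp 2 w) := b.sum_repr_symm (toLp 2 w)
  rw [Function.comp_apply, hsum, LinearIsometryEquiv.norm_map, EuclideanSpace.real_norm_sq_eq,
    ← b.repr_apply_apply, LinearIsometryEquiv.apply_symm_apply, ← add_sum_erase _ _ (mem_univ i₀)]
  ring

section SumSqDev

variable {n : ℕ}

noncomputable def sumSqDev (x : Fin n → ℝ) : ℝ := ∑ i, (x i - (∑ j, x j) / n) ^ 2

@[fun_prop]
lemma measurable_sumSqDev : Measurable (sumSqDev (n := n)) := by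
  unfold sumSqDev
  fun_prop

lemma sumSqDev_mul_add (a b : ℝ) (x : Fin n → ℝ) :
    sumSqDev (fun i => a * x i + b) = a ^ 2 * sumSqDev x := by
  rcases n.eq_zero_or_pos with rfl | hn
  · simp [sumSqDev]
  have hmean : (∑ j, (a * x j + b)) / n = a * ((∑ j, x j) / n) + b := by
    rw [sum_add_distrib, ← mul_sum, sum_const, card_univ, Fintype.card_fin, nsmul_eq_mul]
    field_simp
  simp only [sumSqDev, hmean, mul_sum]
  exact sum_congr rfl fun i _ => by ring

lemma sumSqDev_eq_sum_sq_sub (x : Fin n → ℝ) :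
    sumSqDev x = ∑ i, x i ^ 2 - (∑ i, x i) ^ 2 / n := by
  rcases n.eq_zero_or_pos with rfl | hn
  · simp [sumSqDev]
  simp only [sumSqDev, sub_sq, sum_add_distrib, sum_sub_distrib, ← sum_mul, ← mul_sum,
    sum_const, card_univ, Fintype.card_fin, nsmul_eq_mul]
  field_simp
  ring

noncomputable def normalizedOnes (n : ℕ) : EuclideanSpace ℝ (Fin n) :=
  (√n)⁻¹ • toLp 2 fun _ => 1

lemma norm_normalizedOnes [NeZero n] : ‖normalizedOnes n‖ = 1 := by
  have hn : (0 : ℝ) < n := by exact_mod_cast Nat.pos_of_ne_zero (NeZero.ne n)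
  rw [normalizedOnes, norm_smul, EuclideanSpace.norm_eq]
  simp only [Real.norm_eq_abs, norm_one, one_pow, sum_const, card_univ, Fintype.card_fin,
    nsmul_eq_mul, mul_one, abs_inv, abs_of_nonneg (sqrt_nonneg _)]
  exact inv_mul_cancel₀ (sqrt_ne_zero'.2 hn)

lemma sumSqDev_eq_norm_sq_sub_inner_sq (x : Fin n → ℝ) :
    sumSqDev x = ‖toLp 2 x‖ ^ 2 - ⟪normalizedOnes n, toLp 2 x⟫ ^ 2 := by
  rw [sumSqDev_eq_sum_sq_sub, EuclideanSpace.real_norm_sq_eq, normalizedOnes, inner_smul_left]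
  simp [EuclideanSpace.inner_eq_star_dotProduct, dotProduct, mul_pow, div_eq_inv_mul]

lemma map_sumSqDev_pi_gaussianReal [NeZero n] :
    (Measure.pi fun _ : Fin n => gaussianReal 0 1).map sumSqDev =
      (Measure.pi fun _ : Fin n => gaussianReal 0 1).map fun w => ∑ i ∈ univ.erase 0, w i ^ 2 := by
  have hsumSqDev : sumSqDev = (fun y => ‖y‖ ^ 2 - ⟪normalizedOnes n, y⟫ ^ 2) ∘ toLp 2 :=
    funext sumSqDev_eq_norm_sq_sub_inner_sq
  rw [hsumSqDev, ← Measure.map_map (by fun_prop) (by fun_prop), map_pi_eq_stdGaussian,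
    map_norm_sq_sub_inner_sq_stdGaussian norm_normalizedOnes]

lemma pi_gaussianReal_sumSqDev_gt_le [NeZero n] {δ : ℝ} (hδ : 0 < δ) :
    Measure.pi (fun _ : Fin n => gaussianReal 0 1) {x | (1 + δ) * ((n : ℝ) - 1) < sumSqDev x} ≤
      ENNReal.ofReal ((exp (-δ) * (1 + δ)) ^ (((n : ℝ) - 1) / 2)) := by
  have hcard : (#(univ.erase (0 : Fin n)) : ℝ) = n - 1 := by
    rw [card_erase_of_mem (mem_univ _), card_univ, Fintype.card_fin,
      Nat.cast_pred (Nat.pos_of_ne_zero (NeZero.ne n))]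
  have hlaw := congrArg (· (Set.Ioi ((1 + δ) * ((n : ℝ) - 1))))
    (map_sumSqDev_pi_gaussianReal (n := n))
  rw [Measure.map_apply (by fun_prop) measurableSet_Ioi,
    Measure.map_apply (by fun_prop) measurableSet_Ioi] at hlaw
  have htail := measure_sum_sq_gt_le (P := Measure.pi fun _ : Fin n => gaussianReal 0 1)
    (Z := fun i w => w i) (fun i => measurable_pi_apply i)
    (iIndepFun_pi (X := fun _ => id) fun _ => aemeasurable_id)
    (fun i => (measurePreserving_eval _ i).map_eq) (univ.erase 0) hδ
  rw [hcard] at htail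
  exact hlaw.trans_le htail

end SumSqDev

lemma map_standardize_eq_pi_gaussianReal {ι Ω : Type*} [Fintype ι] [MeasurableSpace Ω]
    {P : Measure Ω} {X : ι → Ω → ℝ} (hXm : ∀ i, Measurable (X i)) (hindep : iIndepFun X P)
    {μ σ : ℝ} (hσ : 0 < σ) (hlaw : ∀ i, P.map (X i) = gaussianReal μ ⟨σ ^ 2, sq_nonneg σ⟩) :
    P.map (fun ω i => (X i ω - μ) / σ) = Measure.pi fun _ => gaussianReal 0 1 := by
  have hYindep : iIndepFun (fun i ω => (X i ω - μ) / σ) P :=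
    hindep.comp (fun _ x => (x - μ) / σ) fun _ => by fun_prop
  rw [hYindep.map_fun_eq_pi_map fun i => (((hXm i).sub_const μ).div_const σ).aemeasurable]
  congr 1
  funext i
  rw [(gaussianReal_div_const (gaussianReal_sub_const ⟨(hXm i).aemeasurable, hlaw i⟩ μ) σ).map_eq,
    sub_self, zero_div]
  congr 1
  exact div_self (G₀ := NNReal) (ne_of_gt (pow_pos hσ 2))

theorem sample_variance_tail {Ω : Type*} [MeasurableSpace Ω] (P : Measure Ω)
    [IsProbabilityMeasure P] (n : ℕ) (hn : 2 ≤ n) (μ σ δ : ℝ) (hσ : 0 < σ) (hδ : 0 < δ)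
    (X : Fin n → Ω → ℝ) (hXm : ∀ i, Measurable (X i))
    (hindep : iIndepFun X P)
    (hlaw : ∀ i, Measure.map (X i) P = gaussianReal μ ⟨σ ^ 2, sq_nonneg σ⟩) :
    P {ω | (1 + δ) * σ ^ 2 <
          (∑ i : Fin n, (X i ω - (∑ j : Fin n, X j ω) / n) ^ 2) / ((n : ℝ) - 1)}
      ≤ ENNReal.ofReal ((Real.exp (-δ) * (1 + δ)) ^ (((n : ℝ) - 1) / 2)) := by
  have : NeZero n := ⟨by omega⟩
  have hn1 : (0 : ℝ) < n - 1 := by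
    have : (2 : ℝ) ≤ n := by exact_mod_cast hn
    linarith
  set Y : Ω → Fin n → ℝ := fun ω i => (X i ω - μ) / σ
  have hevent : {ω | (1 + δ) * σ ^ 2 <
      (∑ i : Fin n, (X i ω - (∑ j : Fin n, X j ω) / n) ^ 2) / ((n : ℝ) - 1)} =
      Y ⁻¹' {y | (1 + δ) * ((n : ℝ) - 1) < sumSqDev y} := by
    ext ω
    have hX : (fun i => X i ω) = fun i => σ * Y ω i + μ := funext fun i => by
      simp only [Y]; field_simp; ring
    change _ < sumSqDev (fun i => X i ω) / _ ↔ _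
    rw [hX, sumSqDev_mul_add, lt_div_iff₀ hn1, Set.mem_preimage, Set.mem_ofPred_eq,
      mul_right_comm, mul_comm (σ ^ 2), mul_lt_mul_iff_of_pos_right (by positivity)]
  rw [hevent, ← Measure.map_apply (by fun_prop) (measurableSet_lt measurable_const (by fun_prop)),
    map_standardize_eq_pi_gaussianReal hXm hindep hσ hlaw]
  exact pi_gaussianReal_sumSqDev_gt_le hδ
end
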